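/- For every u ∈ K(H), the operator φ_t(u) is a compact operator on ℓ²(I) for each t ∈ T, and the map ū : T → K(ℓ²(I)), t ↦ φ_t(u), is continuous for the operator norm; moreover, the resulting map K(H) → C(T, K(ℓ²(I))), u ↦ ū, is an injective *-homomorphism into the C*-algebra of continuous K(ℓ²(I))-valued functions on T. -/

import Mathlib

open scoped ComplexOrder

noncomputable section

abbrev ell2 (I : Type*) : Type _ := lp (fun _ : I => ℂ) 2

/-- `n`-th singular value of an operator: distance to operators of rank `< n`. -/
def sval {F : Type*} [NormedAddCommGroup F] [InnerProductSpace ℂ F] (n : ℕ)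
    (a : F →L[ℂ] F) : ℝ :=
  sInf {r : ℝ | ∃ b : F →L[ℂ] F,
    Module.rank ℂ (LinearMap.range (b : F →ₗ[ℂ] F)) < n ∧ r = ‖a - b‖}

/-- rank one operator `z ↦ ⟨z, y⟩ • x` (inner product linear in the first variable). -/
def rankOne {F : Type*} [NormedAddCommGroup F] [InnerProductSpace ℂ F] (x y : F) :
    F →L[ℂ] F :=
  (ContinuousLinearMap.toSpanSingleton ℂ x).comp ((innerSL ℂ) y)

variable {T I : Type*} [TopologicalSpace T] [CompactSpace T] [T2Space T]

/-- membership in the Hilbert right `C(T,ℂ)`-module `H = ⊕_i p_i E`. -/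
def MemH (p : I → C(T, ℂ)) (ξ : I → C(T, ℂ)) : Prop :=
  (∀ i, p i * ξ i = ξ i) ∧ Summable fun i => star (ξ i) * ξ i

/-- the `E`-valued inner product of `H`, `⟨ξ, η⟩ = ∑ i, η i * * ξ i`. -/
def hinner (ξ η : I → C(T, ℂ)) : C(T, ℂ) := ∑' i, star (η i) * ξ i

/-- the norm of `H`. -/
def hnorm (ξ : I → C(T, ℂ)) : ℝ := Real.sqrt ‖hinner ξ ξ‖

/-- adjointable operators on `H`, i.e. the elements of `L_E(H)`. -/
structure Adjointable (p : I → C(T, ℂ)) where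
  toFun : (I → C(T, ℂ)) → (I → C(T, ℂ))
  adj : (I → C(T, ℂ)) → (I → C(T, ℂ))
  mem' : ∀ ξ, MemH p ξ → MemH p (toFun ξ)
  adj_mem' : ∀ ξ, MemH p ξ → MemH p (adj ξ)
  map_add' : ∀ ξ η, MemH p ξ → MemH p η → toFun (ξ + η) = toFun ξ + toFun η
  map_smul' : ∀ (x : C(T, ℂ)) ξ, MemH p ξ →
    toFun (fun i => ξ i * x) = fun i => toFun ξ i * x
  bound' : ∃ C : ℝ, ∀ ξ, MemH p ξ → hnorm (toFun ξ) ≤ C * hnorm ξ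
  inner_adj' : ∀ ξ η, MemH p ξ → MemH p η → hinner (toFun ξ) η = hinner ξ (adj η)

/-- `a : ℓ²(I) → ℓ²(I)` represents `φ_t u := ψ_t ∘ u ∘ ψ`. -/
def Represents (p : I → C(T, ℂ)) (t : T)
    (u : (I → C(T, ℂ)) → (I → C(T, ℂ))) (a : ell2 I →L[ℂ] ell2 I) : Prop :=
  ∀ ζ : ell2 I, ∀ i : I, (a ζ : ∀ _ : I, ℂ) i = u (fun j => ((ζ : ∀ _ : I, ℂ) j) • p j) i t

/-- membership in `K(H)`: uniform approximation, on the unit ball of `H`, by finite sums of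
rank one module operators. -/
def CompactH (p : I → C(T, ℂ)) (u : (I → C(T, ℂ)) → (I → C(T, ℂ))) : Prop :=
  ∀ ε : ℝ, 0 < ε → ∃ (m : ℕ) (ξs ηs : Fin m → (I → C(T, ℂ))),
    (∀ k, MemH p (ξs k) ∧ MemH p (ηs k)) ∧
    ∀ ζ, MemH p ζ → hnorm ζ ≤ 1 →
      hnorm (fun i => u ζ i - ∑ k, ξs k i * hinner ζ (ηs k)) ≤ ε

/-- `u ∈ L^p(E,H)`, expressed through a family `A` of representatives of the `φ_t u`:
the family `(θ_n(u)^p)ₙ` is summable in `E`. -/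
def InLp {I : Type*} (pp : ℝ) (A : T → (ell2 I →L[ℂ] ell2 I)) : Prop :=
  ∃ Θ : ℕ → C(T, ℝ), (∀ n t, Θ n t = sval (n + 1) (A t) ^ pp) ∧ Summable Θ

/-- the norm `‖u‖_p = ‖∑ₙ θ_n(u)^p‖^(1/p)`. -/
def pnorm {I : Type*} (pp : ℝ) (A : T → (ell2 I →L[ℂ] ell2 I)) : ℝ :=
  (⨆ t : T, ∑' n : ℕ, sval (n + 1) (A t) ^ pp) ^ (1 / pp)

/-- the operator norm of an element of `L_E(H)`. -/
def opNormH (p : I → C(T, ℂ)) (u : Adjointable p) : ℝ :=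
  ⨆ ξ : {ξ : I → C(T, ℂ) // MemH p ξ ∧ hnorm ξ ≤ 1}, hnorm (u.toFun ξ)

end

/-!
The evaluation maps `ψ_t : H → ℓ²(I)` satisfy `⟪ψ_t η, ψ_t ξ⟫ = ⟨ξ, η⟩ t`, so `‖ψ_t ξ‖ ≤ ‖ξ‖`,
and `t ↦ ψ_t ξ` is continuous, being the uniform limit of its finite truncations.
An adjointable `u` is local: `(u ξ) t` only depends on `ψ_t ξ`, by `C(T)`-linearity and
boundedness applied to cutoffs of `ξ`. Locality gives `φ_t(u) ∘ ψ_t = ψ_t ∘ u`, from which the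
*-homomorphism identities and injectivity follow. For a rank one module operator `ξ⟨·, η⟩`,
`φ_t` is the rank one operator `ψ_t ξ ⟨·, ψ_t η⟩`, compact and norm continuous in `t`; since
every `u ∈ K(H)` is a uniform limit of sums of these, `φ_t(u)` is compact and `t ↦ φ_t(u)` is
continuous.
-/

open Filter Topology

section CStarAlgebra

variable {A ι : Type*} [CStarAlgebra A] [PartialOrder A] [StarOrderedRing A]

theorem norm_sum_star_mul_le [Fintype ι] (f g : ι → A) :
    ‖∑ i, star (g i) * f i‖ ≤
      √‖∑ i, star (f i) * f i‖ * √‖∑ i, star (g i) * g i‖ := by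
  -- Cauchy–Schwarz in the C⋆-module `A^ι`, whose inner product is `⟪x, y⟫ = ∑ i, y i * star (x i)`.
  simpa [WithCStarModule.pi_norm, WithCStarModule.pi_inner, WithCStarModule.inner_def] using
    CStarModule.norm_inner_le (A := A) (WithCStarModule A (ι → A))
      (x := (WithCStarModule.equiv A _).symm (star ∘ f))
      (y := (WithCStarModule.equiv A _).symm (star ∘ g))

theorem summable_star_mul {f g : ι → A} (hf : Summable fun i => star (f i) * f i)
    (hg : Summable fun i => star (g i) * g i) : Summable fun i => star (g i) * f i := by
  classical
  rw [summable_iff_vanishing_norm] at hf hg ⊢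
  intro ε hε
  obtain ⟨s, hs⟩ := hf ε hε
  obtain ⟨s', hs'⟩ := hg ε hε
  refine ⟨s ∪ s', fun r hr => ?_⟩
  rw [Finset.disjoint_union_right] at hr
  calc ‖∑ i ∈ r, star (g i) * f i‖
      ≤ √‖∑ i ∈ r, star (f i) * f i‖ * √‖∑ i ∈ r, star (g i) * g i‖ := by
        simp only [← Finset.sum_coe_sort r]
        exact norm_sum_star_mul_le _ _
    _ < √ε * √ε := by
        gcongr
        exacts [hs r hr.1, hs' r hr.2]
    _ = ε := Real.mul_self_sqrt hε.le

end CStarAlgebra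

section Evaluation

variable {T I : Type*} [TopologicalSpace T]

theorem ContinuousMap.star_mul_self_apply (f : C(T, ℂ)) (t : T) :
    (star f * f) t = (‖f t‖ : ℂ) ^ 2 :=
  RCLike.conj_mul (f t)

theorem hasSum_norm_sq_apply {ξ : I → C(T, ℂ)} (hξ : Summable fun i => star (ξ i) * ξ i)
    (t : T) : HasSum (fun i => ‖ξ i t‖ ^ 2) (hinner ξ ξ t).re := by
  simpa only [hinner, ContinuousMap.star_mul_self_apply, ← Complex.ofReal_pow,
    Complex.ofReal_re] using Complex.hasSum_re (ContinuousMap.hasSum_apply hξ.hasSum t)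

theorem memℓp_apply {ξ : I → C(T, ℂ)} (hξ : Summable fun i => star (ξ i) * ξ i) (t : T) :
    Memℓp (fun i => ξ i t) 2 :=
  memℓp_gen (by simpa using (hasSum_norm_sq_apply hξ t).summable)

/-- `ψ_t ξ`. -/
noncomputable def evalEll2 {ξ : I → C(T, ℂ)} (hξ : Summable fun i => star (ξ i) * ξ i)
    (t : T) : ell2 I :=
  ⟨fun i => ξ i t, memℓp_apply hξ t⟩

@[simp]
theorem evalEll2_apply {ξ : I → C(T, ℂ)} (hξ : Summable fun i => star (ξ i) * ξ i) (t : T)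
    (i : I) : (evalEll2 hξ t : ∀ _ : I, ℂ) i = ξ i t :=
  rfl

theorem star_hinner [CompactSpace T] (ξ η : I → C(T, ℂ)) :
    star (hinner ξ η) = hinner η ξ := by
  rw [hinner, hinner, tsum_star]
  simp only [star_mul, star_star]

variable [CompactSpace T] {ξ η : I → C(T, ℂ)} (hξ : Summable fun i => star (ξ i) * ξ i)
  (hη : Summable fun i => star (η i) * η i)

theorem inner_evalEll2 (t : T) :
    inner ℂ (evalEll2 hη t) (evalEll2 hξ t) = hinner ξ η t := by
  have hξη := summable_star_mul hξ hη
  rw [lp.inner_eq_tsum, hinner, ← ContinuousMap.tsum_apply hξη]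
  exact tsum_congr fun i => mul_comm _ _

theorem norm_evalEll2_sq (t : T) : (‖evalEll2 hξ t‖ : ℂ) ^ 2 = hinner ξ ξ t := by
  rw [← inner_evalEll2 hξ hξ]
  exact (inner_self_eq_norm_sq_to_K (evalEll2 hξ t)).symm

theorem norm_evalEll2_le (t : T) : ‖evalEll2 hξ t‖ ≤ hnorm ξ := by
  rw [hnorm, Real.le_sqrt (norm_nonneg _) (norm_nonneg _)]
  calc ‖evalEll2 hξ t‖ ^ 2 = ‖hinner ξ ξ t‖ := by
        rw [← norm_evalEll2_sq, norm_pow, Complex.norm_real, norm_norm]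
    _ ≤ ‖hinner ξ ξ‖ := ContinuousMap.norm_coe_le_norm _ t

theorem norm_apply_le_hnorm (hξ : Summable fun i => star (ξ i) * ξ i) (i : I) (t : T) :
    ‖ξ i t‖ ≤ hnorm ξ :=
  (lp.norm_apply_le_norm two_ne_zero (evalEll2 hξ t) i).trans (norm_evalEll2_le hξ t)

theorem hnorm_le_of_forall_norm_evalEll2_le {c : ℝ} (hc : 0 ≤ c)
    (h : ∀ t, ‖evalEll2 hξ t‖ ≤ c) : hnorm ξ ≤ c := by
  rw [hnorm, Real.sqrt_le_left hc]
  refine (ContinuousMap.norm_le _ (sq_nonneg c)).2 fun t => ?_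
  rw [← norm_evalEll2_sq hξ, norm_pow, Complex.norm_real, norm_norm]
  exact pow_le_pow_left₀ (norm_nonneg _) (h t) 2

theorem hnorm_mul_cutoff_le (hξ : Summable fun i => star (ξ i) * ξ i) {ε : ℝ} (hε : 0 < ε)
    (a : C(T, ℂ)) (ha : ∀ s, a s = ((ε / (ε + ‖hinner ξ ξ s‖) : ℝ) : ℂ)) :
    hnorm (fun j => ξ j * a) ≤ √ε := by
  refine Real.sqrt_le_sqrt ((ContinuousMap.norm_le _ hε.le).2 fun s => ?_)
  have h : hinner (fun j => ξ j * a) (fun j => ξ j * a) = star a * a * hinner ξ ξ := by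
    rw [hinner, hinner, ← hξ.tsum_mul_left]
    exact tsum_congr fun j => by simp only [star_mul]; ring
  have hx := norm_nonneg (hinner ξ ξ s)
  rw [h, ContinuousMap.mul_apply, ContinuousMap.star_mul_self_apply, ha]
  simp only [norm_mul, norm_pow, Complex.norm_real, Real.norm_eq_abs, sq_abs]
  rw [div_pow, div_mul_eq_mul_div, div_le_iff₀ (pow_pos (add_pos_of_pos_of_nonneg hε hx) 2)]
  nlinarith [mul_nonneg (mul_nonneg hε.le hε.le) hε.le, mul_nonneg (mul_nonneg hε.le hε.le) hx,
    mul_nonneg (mul_nonneg hε.le hx) hx]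

theorem norm_evalEll2_sub_sum_single_sq [DecidableEq I] (s : Finset I) (t : T) :
    ‖evalEll2 hξ t - ∑ i ∈ s, lp.single 2 i (ξ i t)‖ ^ 2
      = (hinner ξ ξ t - (∑ i ∈ s, star (ξ i) * ξ i) t).re := by
  have h := lp.norm_sub_norm_compl_sub_single (p := 2) (by norm_num) (evalEll2 hξ t) s
  simp only [ENNReal.toReal_ofNat, Real.rpow_two, evalEll2_apply] at h
  rw [Complex.sub_re, ← norm_evalEll2_sq hξ, ContinuousMap.sum_apply]
  simp only [ContinuousMap.star_mul_self_apply, Complex.re_sum]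
  norm_cast
  linarith

theorem continuous_evalEll2 : Continuous fun t => evalEll2 hξ t := by
  classical
  refine TendstoUniformly.continuous (F := fun s t => ∑ i ∈ s, lp.single 2 i (ξ i t))
    (p := atTop) ?_ (Frequently.of_forall fun s => ?_)
  · rw [Metric.tendstoUniformly_iff]
    intro ε hε
    filter_upwards [(tendsto_iff_norm_sub_tendsto_zero.1 hξ.hasSum).eventually
      (gt_mem_nhds (pow_pos hε 2))] with s hs t
    rw [dist_eq_norm, ← sq_lt_sq₀ (norm_nonneg _) hε.le, norm_evalEll2_sub_sum_single_sq]
    calc _ ≤ ‖hinner ξ ξ t - (∑ i ∈ s, star (ξ i) * ξ i) t‖ := Complex.re_le_norm _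
      _ ≤ ‖∑ i ∈ s, star (ξ i) * ξ i - hinner ξ ξ‖ := by
        rw [norm_sub_rev]
        simpa only [ContinuousMap.sub_apply] using
          ContinuousMap.norm_coe_le_norm (∑ i ∈ s, star (ξ i) * ξ i - hinner ξ ξ) t
      _ < ε ^ 2 := hs
  · exact continuous_finsetSum _ fun i _ =>
      (lp.isometry_single i).continuous.comp (ξ i).continuous

end Evaluation

section HilbertModule

variable {T I : Type*} [TopologicalSpace T] {p : I → C(T, ℂ)}

variable (p) in
/-- `ψ ζ`. -/
noncomputable def ofEll2 (ζ : ell2 I) : I → C(T, ℂ) := fun j => (ζ : ∀ _ : I, ℂ) j • p j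

theorem ofEll2_evalEll2_apply {ξ : I → C(T, ℂ)} (hξ : MemH p ξ) (j : I) (t : T) :
    ofEll2 p (evalEll2 hξ.2 t) j t = ξ j t := by
  simpa [ofEll2, mul_comm] using DFunLike.congr_fun (hξ.1 j) t

variable [CompactSpace T]

variable (p) in
def hilbertModule : Submodule C(T, ℂ) (I → C(T, ℂ)) where
  carrier := {ξ | MemH p ξ}
  zero_mem' := ⟨fun _ => mul_zero _, by simp⟩
  add_mem' := by
    rintro ξ η ⟨hpξ, hξ⟩ ⟨hpη, hη⟩
    refine ⟨fun i => by simp only [Pi.add_apply, mul_add, hpξ i, hpη i], ?_⟩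
    refine (((hξ.add (summable_star_mul hξ hη)).add (summable_star_mul hη hξ)).add hη).congr
      fun i => ?_
    simp only [Pi.add_apply, star_add, add_mul, mul_add]
    abel
  smul_mem' := by
    rintro c ξ ⟨hpξ, hξ⟩
    refine ⟨fun i => by simp only [Pi.smul_apply, smul_eq_mul, mul_left_comm, hpξ i], ?_⟩
    refine (hξ.mul_left (star c * c)).congr fun i => ?_
    simp only [Pi.smul_apply, smul_eq_mul, star_mul]
    ring

theorem MemH.mul_right {ξ : I → C(T, ℂ)} (hξ : MemH p ξ) (x : C(T, ℂ)) :
    MemH p fun i => ξ i * x := by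
  have h : (fun i => ξ i * x) = x • ξ := funext fun i => mul_comm _ _
  rw [h]
  exact (hilbertModule p).smul_mem x hξ

theorem MemH.sub {ξ η : I → C(T, ℂ)} (hξ : MemH p ξ) (hη : MemH p η) : MemH p (ξ - η) :=
  (hilbertModule p).sub_mem hξ hη

theorem memH_ofEll2 (hp : ∀ i t, p i t = 0 ∨ p i t = 1) (ζ : ell2 I) :
    MemH p (ofEll2 p ζ) := by
  refine ⟨fun i => ContinuousMap.ext fun t => ?_, ?_⟩
  · rcases hp i t with h | h <;> simp [ofEll2, h]
  · have hζ : Summable fun j => ‖(ζ : ∀ _ : I, ℂ) j‖ ^ 2 := by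
      simpa using (lp.memℓp ζ).summable (p := 2) (by norm_num)
    refine Summable.of_norm_bounded hζ fun j => ?_
    refine (ContinuousMap.norm_le _ (sq_nonneg _)).2 fun t => ?_
    rw [ContinuousMap.star_mul_self_apply]
    rcases hp j t with h | h <;> simp [ofEll2, h]

theorem hinner_ofEll2_apply (hp : ∀ i t, p i t = 0 ∨ p i t = 1) {ξ : I → C(T, ℂ)}
    (hξ : MemH p ξ) (ζ : ell2 I) (t : T) :
    hinner ξ (ofEll2 p ζ) t = inner ℂ ζ (evalEll2 hξ.2 t) := by
  rw [← inner_evalEll2 hξ.2 (memH_ofEll2 hp ζ).2, lp.inner_eq_tsum, lp.inner_eq_tsum]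
  refine tsum_congr fun j => ?_
  have hξj := DFunLike.congr_fun (hξ.1 j) t
  rcases hp j t with h | h <;> simp_all [ofEll2]

theorem hinner_ofEll2_left_apply (hp : ∀ i t, p i t = 0 ∨ p i t = 1) {ξ : I → C(T, ℂ)}
    (hξ : MemH p ξ) (ζ : ell2 I) (t : T) :
    hinner (ofEll2 p ζ) ξ t = inner ℂ (evalEll2 hξ.2 t) ζ := by
  rw [← inner_conj_symm, ← hinner_ofEll2_apply hp hξ, ← star_hinner]
  rfl

theorem hnorm_ofEll2_le (hp : ∀ i t, p i t = 0 ∨ p i t = 1) (ζ : ell2 I) :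
    hnorm (ofEll2 p ζ) ≤ ‖ζ‖ :=
  hnorm_le_of_forall_norm_evalEll2_le (memH_ofEll2 hp ζ).2 (norm_nonneg ζ) fun t =>
    lp.norm_mono two_ne_zero fun j => by rcases hp j t with h | h <;> simp [ofEll2, h]

theorem Represents.apply_eq (hp : ∀ i t, p i t = 0 ∨ p i t = 1) {t : T}
    {f : (I → C(T, ℂ)) → I → C(T, ℂ)} (hf : ∀ ξ, MemH p ξ → MemH p (f ξ))
    {a : ell2 I →L[ℂ] ell2 I} (ha : Represents p t f a) (ζ : ell2 I) :
    a ζ = evalEll2 (hf _ (memH_ofEll2 hp ζ)).2 t :=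
  lp.ext (funext (ha ζ))

end HilbertModule

namespace Adjointable

variable {T I : Type*} [TopologicalSpace T] [CompactSpace T] {p : I → C(T, ℂ)}
  (u : Adjointable p)

theorem exists_bound_nonneg :
    ∃ C, 0 ≤ C ∧ ∀ ξ, MemH p ξ → hnorm (u.toFun ξ) ≤ C * hnorm ξ := by
  obtain ⟨C, hC⟩ := u.bound'
  exact ⟨max C 0, le_max_right _ _, fun ξ hξ =>
    (hC ξ hξ).trans (mul_le_mul_of_nonneg_right (le_max_left _ _) (Real.sqrt_nonneg _))⟩

theorem apply_eq_zero_of_forall_apply_eq_zero {ξ : I → C(T, ℂ)} (hξ : MemH p ξ) {t : T}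
    (h : ∀ j, ξ j t = 0) (i : I) : u.toFun ξ i t = 0 := by
  obtain ⟨C, hC0, hC⟩ := u.exists_bound_nonneg
  have hft : hinner ξ ξ t = 0 := by
    rw [← norm_evalEll2_sq hξ.2, show evalEll2 hξ.2 t = 0 from lp.ext (funext h)]
    simp
  -- The cutoff `a = ε / (ε + ‖⟨ξ, ξ⟩‖)` equals `1` at `t`, so it leaves `(u ξ) i t` unchanged,
  -- while `‖ξ a‖ ≤ √ε`.
  have key : ∀ ε > 0, ‖u.toFun ξ i t‖ ≤ C * √ε := by
    intro ε hε
    obtain ⟨a, ha⟩ :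
        ∃ a : C(T, ℂ), ∀ s, a s = ((ε / (ε + ‖hinner ξ ξ s‖) : ℝ) : ℂ) :=
      ⟨⟨_, Complex.continuous_ofReal.comp <| continuous_const.div
        (continuous_const.add (hinner ξ ξ).continuous.norm)
        fun s => (add_pos_of_pos_of_nonneg hε (norm_nonneg _)).ne'⟩, fun s => rfl⟩
    have hξa : MemH p fun j => ξ j * a := hξ.mul_right a
    calc ‖u.toFun ξ i t‖ = ‖u.toFun (fun j => ξ j * a) i t‖ := by
          rw [u.map_smul' a ξ hξ, ContinuousMap.mul_apply, ha, hft]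
          simp [hε.ne']
      _ ≤ hnorm (u.toFun fun j => ξ j * a) := norm_apply_le_hnorm (u.mem' _ hξa).2 i t
      _ ≤ C * hnorm (fun j => ξ j * a) := hC _ hξa
      _ ≤ C * √ε := by gcongr; exact hnorm_mul_cutoff_le hξ.2 hε a ha
  have hlim : Tendsto (fun ε => C * √ε) (𝓝[>] 0) (𝓝 0) := by
    have hcont : Continuous fun ε : ℝ => C * √ε := by fun_prop
    simpa using (hcont.tendsto 0).mono_left nhdsWithin_le_nhds
  exact norm_le_zero_iff.1 (ge_of_tendsto hlim (eventually_nhdsWithin_of_forall key))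

theorem apply_congr {ξ η : I → C(T, ℂ)} (hξ : MemH p ξ) (hη : MemH p η) {t : T}
    (h : ∀ j, ξ j t = η j t) (i : I) : u.toFun ξ i t = u.toFun η i t := by
  have hsplit := u.map_add' η (ξ - η) hη (hξ.sub hη)
  rw [add_sub_cancel] at hsplit
  rw [hsplit, Pi.add_apply, ContinuousMap.add_apply,
    u.apply_eq_zero_of_forall_apply_eq_zero (hξ.sub hη) (fun j => sub_eq_zero.2 (h j)), add_zero]

end Adjointable

section RankOne

variable {X F : Type*} [TopologicalSpace X] [NormedAddCommGroup F] [InnerProductSpace ℂ F]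

theorem isCompactOperator_rankOne (x y : F) : IsCompactOperator (rankOne x y) :=
  (isCompactOperator_of_locallyCompactSpace_dom (innerSL ℂ y)).clm_comp
    (ContinuousLinearMap.toSpanSingleton ℂ x)

theorem continuous_rankOne {x y : X → F} (hx : Continuous x) (hy : Continuous y) :
    Continuous fun s => rankOne (x s) (y s) :=
  (ContinuousLinearMap.toSpanSingletonCLE.continuous.comp hx).clm_comp
    ((innerSL ℂ).continuous.comp hy)

end RankOne

section Represents

variable {T I : Type*} [TopologicalSpace T] {p : I → C(T, ℂ)} {t : T}
  {a b c d e : ell2 I →L[ℂ] ell2 I}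

theorem Represents.eq_smul_add_smul {f g : (I → C(T, ℂ)) → I → C(T, ℂ)} {α β : ℂ}
    (ha : Represents p t f a) (hb : Represents p t g b)
    (he : Represents p t (fun ξ => α • f ξ + β • g ξ) e) : e = α • a + β • b := by
  ext ζ i
  simp only [he ζ i, add_apply, smul_apply, lp.coeFn_add, lp.coeFn_smul, Pi.add_apply,
    Pi.smul_apply, ha ζ i, hb ζ i, ContinuousMap.add_apply, ContinuousMap.smul_apply]

variable [CompactSpace T]

theorem Represents.eq_comp (hp : ∀ i t, p i t = 0 ∨ p i t = 1) {u v : Adjointable p}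
    (ha : Represents p t u.toFun a) (hb : Represents p t v.toFun b)
    (hc : Represents p t (u.toFun ∘ v.toFun) c) : c = a ∘L b := by
  ext ζ i
  have hvζ := v.mem' _ (memH_ofEll2 hp ζ)
  rw [ContinuousLinearMap.comp_apply, hc ζ i, ha (b ζ) i, hb.apply_eq hp v.mem' ζ]
  exact u.apply_congr hvζ (memH_ofEll2 hp _) (fun j => (ofEll2_evalEll2_apply hvζ j t).symm) i

theorem Represents.eq_adjoint (hp : ∀ i t, p i t = 0 ∨ p i t = 1) {u : Adjointable p}
    (ha : Represents p t u.toFun a) (hd : Represents p t u.adj d) :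
    d = ContinuousLinearMap.adjoint a := by
  refine (ContinuousLinearMap.eq_adjoint_iff _ _).2 fun ζ η => ?_
  rw [hd.apply_eq hp u.adj_mem' ζ, ha.apply_eq hp u.mem' η,
    ← hinner_ofEll2_left_apply hp (u.adj_mem' _ (memH_ofEll2 hp ζ)),
    ← u.inner_adj' _ _ (memH_ofEll2 hp η) (memH_ofEll2 hp ζ),
    hinner_ofEll2_apply hp (u.mem' _ (memH_ofEll2 hp η))]

theorem Adjointable.apply_eq_zero_of_forall_ofEll2 (hp : ∀ i t, p i t = 0 ∨ p i t = 1)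
    {u : Adjointable p} (h : ∀ t ζ i, u.toFun (ofEll2 p ζ) i t = 0) {ξ : I → C(T, ℂ)}
    (hξ : MemH p ξ) (i : I) : u.toFun ξ i = 0 := by
  ext t
  rw [u.apply_congr hξ (memH_ofEll2 hp (evalEll2 hξ.2 t))
    (fun j => (ofEll2_evalEll2_apply hξ j t).symm) i]
  exact h t _ i

end Represents

section Compact

variable {T I : Type*} [TopologicalSpace T] [CompactSpace T] {p : I → C(T, ℂ)}

theorem Represents.norm_sub_sum_rankOne_le (hp : ∀ i t, p i t = 0 ∨ p i t = 1)
    {u : Adjointable p} {t : T} {a : ell2 I →L[ℂ] ell2 I} (ha : Represents p t u.toFun a)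
    {ε : ℝ} (hε : 0 ≤ ε) {m : ℕ} {ξs ηs : Fin m → I → C(T, ℂ)}
    (hmem : ∀ k, MemH p (ξs k) ∧ MemH p (ηs k))
    (happ : ∀ ζ, MemH p ζ → hnorm ζ ≤ 1 →
      hnorm (fun i => u.toFun ζ i - ∑ k, ξs k i * hinner ζ (ηs k)) ≤ ε) :
    ‖a - ∑ k, rankOne (evalEll2 (hmem k).1.2 t) (evalEll2 (hmem k).2.2 t)‖ ≤ ε := by
  refine ContinuousLinearMap.opNorm_le_of_unit_norm hε fun ζ hζ => ?_
  have hψζ := memH_ofEll2 hp ζ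
  have hδ : MemH p fun i =>
      u.toFun (ofEll2 p ζ) i - ∑ k, ξs k i * hinner (ofEll2 p ζ) (ηs k) := by
    convert (u.mem' _ hψζ).sub ((hilbertModule p).sum_mem (t := Finset.univ) fun k _ =>
      (hmem k).1.mul_right (hinner (ofEll2 p ζ) (ηs k))) using 1
    funext i
    simp [Finset.sum_apply]
  have hcoord : (a - ∑ k, rankOne (evalEll2 (hmem k).1.2 t) (evalEll2 (hmem k).2.2 t)) ζ
      = evalEll2 hδ.2 t := by
    ext i
    rw [sub_apply, ha.apply_eq hp u.mem', lp.coeFn_sub, Pi.sub_apply, sum_apply, lp.coeFn_sum,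
      Finset.sum_apply]
    simp [rankOne, hinner_ofEll2_left_apply hp (hmem _).2, mul_comm]
  rw [hcoord]
  exact (norm_evalEll2_le _ t).trans (happ _ hψζ ((hnorm_ofEll2_le hp ζ).trans hζ.le))

theorem exists_continuous_compact_approx (hp : ∀ i t, p i t = 0 ∨ p i t = 1)
    {u : Adjointable p} (hu : CompactH p u.toFun) {ε : ℝ} (hε : 0 < ε) :
    ∃ F : T → ell2 I →L[ℂ] ell2 I, Continuous F ∧ (∀ t, IsCompactOperator (F t)) ∧
      ∀ t a, Represents p t u.toFun a → ‖a - F t‖ ≤ ε := by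
  obtain ⟨m, ξs, ηs, hmem, happ⟩ := hu ε hε
  refine ⟨fun t => ∑ k, rankOne (evalEll2 (hmem k).1.2 t) (evalEll2 (hmem k).2.2 t), ?_,
    fun t => ?_, fun t a ha => ha.norm_sub_sum_rankOne_le hp hε.le hmem happ⟩
  · exact continuous_finsetSum _ fun k _ =>
      continuous_rankOne (continuous_evalEll2 _) (continuous_evalEll2 _)
  · exact (compactOperator (RingHom.id ℂ) (ell2 I) (ell2 I)).sum_mem fun k _ =>
      isCompactOperator_rankOne _ _

theorem Represents.isCompactOperator (hp : ∀ i t, p i t = 0 ∨ p i t = 1)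
    {u : Adjointable p} (hu : CompactH p u.toFun) {t : T} {a : ell2 I →L[ℂ] ell2 I}
    (ha : Represents p t u.toFun a) : IsCompactOperator a := by
  refine isClosed_setOfPred_isCompactOperator.closure_subset
    (Metric.mem_closure_iff.2 fun ε hε => ?_)
  obtain ⟨F, -, hFc, hFa⟩ := exists_continuous_compact_approx hp hu (half_pos hε)
  exact ⟨F t, hFc t, by rw [dist_eq_norm]; linarith [hFa t a ha]⟩

theorem continuous_of_forall_represents (hp : ∀ i t, p i t = 0 ∨ p i t = 1)
    {u : Adjointable p} (hu : CompactH p u.toFun) {A : T → ell2 I →L[ℂ] ell2 I}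
    (hA : ∀ t, Represents p t u.toFun (A t)) : Continuous A := by
  refine continuous_of_uniform_approx_of_continuous fun U hU => ?_
  obtain ⟨ε, hε, hεU⟩ := Metric.mem_uniformity_dist.1 hU
  obtain ⟨F, hF, -, hFA⟩ := exists_continuous_compact_approx hp hu (half_pos hε)
  exact ⟨F, hF, fun t => hεU (by rw [dist_eq_norm]; linarith [hFA t (A t) (hA t)])⟩

end Compact

theorem stmt5_general {T I : Type*} [TopologicalSpace T] [CompactSpace T]
    (p : I → C(T, ℂ)) (hp : ∀ i t, p i t = 0 ∨ p i t = 1)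
    (u v : Adjointable p) (hu : CompactH p u.toFun) :
    -- `φ_t u` is a compact operator for every `t`
    (∀ (t : T) (a : ell2 I →L[ℂ] ell2 I), Represents p t u.toFun a →
      IsCompactOperator (⇑a)) ∧
    -- `ū : t ↦ φ_t u` is continuous for the operator norm
    (∀ A : T → (ell2 I →L[ℂ] ell2 I), (∀ t, Represents p t u.toFun (A t)) →
      Continuous A) ∧
    -- `u ↦ ū` is a *-homomorphism
    (∀ (t : T) (a b c d e : ell2 I →L[ℂ] ell2 I) (α β : ℂ),
      Represents p t u.toFun a → Represents p t v.toFun b →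
      Represents p t (u.toFun ∘ v.toFun) c → Represents p t u.adj d →
      Represents p t (fun ξ => α • u.toFun ξ + β • v.toFun ξ) e →
        c = a ∘L b ∧ d = ContinuousLinearMap.adjoint a ∧ e = α • a + β • b) ∧
    -- `u ↦ ū` is injective on `K(H)`
    ((∀ (t : T) (ζ : ell2 I) (i : I),
        u.toFun (fun j => ((ζ : ∀ _ : I, ℂ) j) • p j) i t = 0) →
      ∀ ξ, MemH p ξ → ∀ i, u.toFun ξ i = 0) :=
  ⟨fun _ _ ha => ha.isCompactOperator hp hu,
    fun _ hA => continuous_of_forall_represents hp hu hA,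
    fun _ _ _ _ _ _ _ _ ha hb hc hd he =>
      ⟨Represents.eq_comp hp ha hb hc, Represents.eq_adjoint hp ha hd,
        Represents.eq_smul_add_smul ha hb he⟩,
    fun h _ hξ i => u.apply_eq_zero_of_forall_ofEll2 hp h hξ i⟩

/-- For `u ∈ K(H)`: each `φ_t u` is a compact operator on `ℓ²(I)`,
the map `ū : t ↦ φ_t u` is norm continuous, and `u ↦ ū` is an injective *-homomorphism
`K(H) → C(T, K(ℓ²(I)))`. -/
theorem stmt5 {T I : Type*} [TopologicalSpace T] [CompactSpace T] [T2Space T]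
    (p : I → C(T, ℂ)) (hp : ∀ i t, p i t = 0 ∨ p i t = 1)
    (u v : Adjointable p) (hu : CompactH p u.toFun) (hv : CompactH p v.toFun) :
    -- `φ_t u` is a compact operator for every `t`
    (∀ (t : T) (a : ell2 I →L[ℂ] ell2 I), Represents p t u.toFun a →
      IsCompactOperator (⇑a)) ∧
    -- `ū : t ↦ φ_t u` is continuous for the operator norm
    (∀ A : T → (ell2 I →L[ℂ] ell2 I), (∀ t, Represents p t u.toFun (A t)) →
      Continuous A) ∧
    -- `u ↦ ū` is a *-homomorphism
    (∀ (t : T) (a b c d e : ell2 I →L[ℂ] ell2 I) (α β : ℂ),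
      Represents p t u.toFun a → Represents p t v.toFun b →
      Represents p t (u.toFun ∘ v.toFun) c → Represents p t u.adj d →
      Represents p t (fun ξ => α • u.toFun ξ + β • v.toFun ξ) e →
        c = a ∘L b ∧ d = ContinuousLinearMap.adjoint a ∧ e = α • a + β • b) ∧
    -- `u ↦ ū` is injective on `K(H)`
    ((∀ (t : T) (ζ : ell2 I) (i : I),
        u.toFun (fun j => ((ζ : ∀ _ : I, ℂ) j) • p j) i t = 0) →
      ∀ ξ, MemH p ξ → ∀ i, u.toFun ξ i = 0) :=
  stmt5_general p hp u v hu
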